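/- If every graph in a family has a layered ℓ-separator for a fixed constant ℓ, then every n-vertex graph in the family has stack-number O(log n) and queue-number O(log n). -/

import Mathlib

/-- `lay` is a layering of `G`: every edge joins vertices in the same layer
or in consecutive layers. -/
def IsLayering {V : Type*} (G : SimpleGraph V) (lay : V → ℕ) : Prop :=
  ∀ u v : V, G.Adj u v →
    lay u = lay v ∨ lay u + 1 = lay v ∨ lay v + 1 = lay u

/-- `G` has a layered `ℓ`-separator with respect to the layering `lay`: every
subgraph `G'` of `G` contains a set `S` with at most `ℓ` vertices in each layer
such that every connected component of `G' − S` has at most `|V(G')| / 2`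
vertices. -/
def HasLayeredSeparator {V : Type*} (G : SimpleGraph V) (lay : V → ℕ) (ℓ : ℕ) : Prop :=
  ∀ G' : G.Subgraph, ∃ S ⊆ G'.verts,
    (∀ i : ℕ, (S ∩ {v | lay v = i}).ncard ≤ ℓ) ∧
    ∀ c : ((G'.deleteVerts S).coe).ConnectedComponent,
      2 * c.supp.ncard ≤ G'.verts.ncard

/-- `G` has a stack layout with `s` stacks: an injective position function on
the vertices and an assignment of the edges to `s` stacks such that no two
edges in the same stack cross. -/
def HasStackLayout {V : Type*} (G : SimpleGraph V) (s : ℕ) : Prop :=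
  ∃ (pos : V → ℕ) (f : Sym2 V → ℕ), Function.Injective pos ∧
    (∀ v w : V, G.Adj v w → f s(v, w) < s) ∧
    (∀ v w x y : V, G.Adj v w → G.Adj x y → f s(v, w) = f s(x, y) →
      ¬ (pos v < pos x ∧ pos x < pos w ∧ pos w < pos y))

/-- `G` has a queue layout with `q` queues: an injective position function on
the vertices and an assignment of the edges to `q` queues such that no two
edges in the same queue nest. -/
def HasQueueLayout {V : Type*} (G : SimpleGraph V) (q : ℕ) : Prop :=
  ∃ (pos : V → ℕ) (f : Sym2 V → ℕ), Function.Injective pos ∧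
    (∀ v w : V, G.Adj v w → f s(v, w) < q) ∧
    (∀ v w x y : V, G.Adj v w → G.Adj x y → f s(v, w) = f s(x, y) →
      ¬ (pos v < pos x ∧ pos x < pos y ∧ pos y < pos w))

/-!
Recursing with layered separators (remove a separator `S` of the subgraph induced on `R`, then
recurse into the components of `R \ S`, each with at most `|R| / 2` vertices) gives every vertex an
address `e v : List ℕ` in a tree of depth at most `log₂ n`. Adjacent vertices have comparable
addresses, and each node holds at most `ℓ` vertices of each layer.

Order the vertices layer by layer and, inside a layer, lexicographically by address, reversing every
odd layer for the stack layout. Anchor each edge at its endpoint `a` of smaller depth and classify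
it by the depth of `a`, the layer offset of its other endpoint, the index of `a` among the vertices
of its node and layer, and the parity of the layer of `a`: at most `6ℓ(log₂ n + 1)` classes. Two
edges of one class share their anchor, or lie in layers at least two apart, or join the same layers
with both endpoints of one lexicographically before both endpoints of the other, because their
anchors have distinct addresses of equal length. Such edges never nest in the layer-by-layer order,
and they never cross in the alternating order, where consecutive layers are traversed in opposite
directions.
-/

open Function

theorem List.lt_of_lt_of_isPrefix {α : Type*} [LT α] :
    ∀ {p p' q q' : List α}, p.length = p'.length → p < p' → p <+: q → p' <+: q' → q < q'
  | [], [], _, _, _, h, _, _ => absurd h (List.not_lt_nil _)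
  | a :: p, b :: p', _, _, hl, h, ⟨t, ht⟩, ⟨t', ht'⟩ => by
    subst ht ht'
    rcases List.cons_lt_cons_iff.mp h with hab | ⟨rfl, htl⟩
    · exact List.cons_lt_cons_iff.mpr (Or.inl hab)
    · exact List.cons_lt_cons_iff.mpr <| Or.inr ⟨rfl,
        lt_of_lt_of_isPrefix (by simpa using hl) htl
          (List.prefix_append _ _) (List.prefix_append _ _)⟩

theorem exists_injective_nat_lt_of_lt {V β : Type*} [Fintype V] [LinearOrder β] (k : V → β) :
    ∃ r : V → ℕ, Injective r ∧ ∀ u v, k u < k v → r u < r v := by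
  classical
  obtain ⟨t, ht⟩ := Countable.exists_injective_nat V
  let : LinearOrder V := LinearOrder.lift' (fun v => toLex (k v, t v)) fun u v h =>
    ht (Prod.ext_iff.mp (toLex.injective h)).2
  have hr : StrictMono fun v : V => (Finset.univ.filter (· < v)).card := fun u v huv =>
    Finset.card_lt_card <| (Finset.ssubset_iff_of_subset fun w hw => by
      simp only [Finset.mem_filter] at hw ⊢; exact ⟨hw.1, hw.2.trans huv⟩).mpr
      ⟨u, by simpa using huv, by simp⟩
  exact ⟨_, hr.injective, fun u v h => hr (Prod.Lex.toLex_lt_toLex.mpr (Or.inl h))⟩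

theorem exists_injective_nat_lt_iff {V β : Type*} [Fintype V] [LinearOrder β] {k : V → β}
    (hk : Injective k) : ∃ r : V → ℕ, Injective r ∧ ∀ u v, r u < r v ↔ k u < k v := by
  obtain ⟨r, hr, hlt⟩ := exists_injective_nat_lt_of_lt k
  refine ⟨r, hr, fun u v => ⟨fun h => ?_, hlt u v⟩⟩
  rcases lt_trichotomy (k u) (k v) with huv | huv | huv
  · exact huv
  · exact absurd h (by rw [hk huv]; exact lt_irrefl _)
  · exact absurd (hlt v u huv) h.not_gt

theorem exists_index_lt_of_ncard_fiber_le {V κ : Type*} [Finite V] (cell : V → κ) {ℓ : ℕ}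
    (h : ∀ k, {v | cell v = k}.ncard ≤ ℓ) :
    ∃ K : V → ℕ, (∀ v, K v < ℓ) ∧ ∀ u v, cell u = cell v → K u = K v → u = v := by
  obtain ⟨r, hr⟩ := Countable.exists_injective_nat V
  let below (u : V) : Set V := {v | cell v = cell u ∧ r v < r u}
  have hlt : ∀ u (S : Set V), insert u (below u) ⊆ S → (below u).ncard < S.ncard :=
    fun u S hS => by
      have := Set.ncard_le_ncard hS (Set.toFinite S)
      rw [Set.ncard_insert_of_notMem (fun h => lt_irrefl _ h.2) (Set.toFinite _)] at this
      omega
  have hmono : ∀ u v, cell u = cell v → r u < r v → (below u).ncard < (below v).ncard :=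
    fun u v hc huv => hlt u _ <|
      Set.insert_subset ⟨hc, huv⟩ fun w hw => ⟨hw.1.trans hc, hw.2.trans huv⟩
  refine ⟨fun u => (below u).ncard, fun u => (hlt u _ fun w hw => ?_).trans_le (h (cell u)), ?_⟩
  · rcases hw with rfl | hw
    exacts [rfl, hw.1]
  · intro u v hc hK
    rcases lt_trichotomy (r u) (r v) with huv | huv | huv
    · exact absurd hK (hmono u v hc huv).ne
    · exact hr huv
    · exact absurd hK (hmono v u hc.symm huv).ne'

theorem Finset.exists_lt_card_injOn {α : Type*} (T : Finset α) :
    ∃ code : α → ℕ, (∀ a ∈ T, code a < T.card) ∧ Set.InjOn code T := by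
  classical
  refine ⟨fun a => if h : a ∈ T then T.equivFin ⟨a, h⟩ else 0, fun a ha => by simp [ha],
    fun a ha b hb hab => ?_⟩
  simp only [Finset.mem_coe] at ha hb
  simpa only [ha, hb, dite_true, Fin.val_inj, EmbeddingLike.apply_eq_iff_eq,
    Subtype.mk.injEq] using hab

section TreeAddressing

variable {V : Type*} {G : SimpleGraph V} {lay : V → ℕ} {ℓ : ℕ}

/-- `e v` is the address of the node of a separator tree of `R` whose separator contains `v`. -/
structure IsTreeAddressing (G : SimpleGraph V) (lay : V → ℕ) (ℓ : ℕ) (R : Set V)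
    (e : V → List ℕ) : Prop where
  two_pow_length_le : ∀ v ∈ R, 2 ^ (e v).length ≤ R.ncard
  prefix_or_prefix_of_adj : ∀ u ∈ R, ∀ v ∈ R, G.Adj u v → e u <+: e v ∨ e v <+: e u
  ncard_cell_le : ∀ p i, {v ∈ R | e v = p ∧ lay v = i}.ncard ≤ ℓ

theorem isTreeAddressing_empty (e : V → List ℕ) : IsTreeAddressing G lay ℓ ∅ e where
  two_pow_length_le := by simp
  prefix_or_prefix_of_adj := by simp
  ncard_cell_le p i := by simp

theorem IsTreeAddressing.of_separator [Finite V] {R S : Set V} [DecidablePred (· ∈ S)]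
    (comp : V → ℕ) (E : ℕ → V → List ℕ) (hS : ∀ i, (S ∩ {v | lay v = i}).ncard ≤ ℓ)
    (hcomp : ∀ u ∈ R \ S, ∀ v ∈ R \ S, G.Adj u v → comp u = comp v)
    (hpart : ∀ k, 2 * {v ∈ R \ S | comp v = k}.ncard ≤ R.ncard)
    (hE : ∀ k, IsTreeAddressing G lay ℓ {v ∈ R \ S | comp v = k} (E k)) :
    IsTreeAddressing G lay ℓ R fun v => if v ∈ S then [] else comp v :: E (comp v) v where
  two_pow_length_le v hv := by
    by_cases hvS : v ∈ S
    · simp only [hvS, if_true, List.length_nil, pow_zero]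
      exact (Set.ncard_pos (Set.toFinite R)).mpr ⟨v, hv⟩
    · simp only [hvS, if_false, List.length_cons, pow_succ]
      have := (hE (comp v)).two_pow_length_le v ⟨⟨hv, hvS⟩, rfl⟩
      linarith [hpart (comp v)]
  prefix_or_prefix_of_adj u hu v hv huv := by
    by_cases huS : u ∈ S
    · simp [huS]
    by_cases hvS : v ∈ S
    · simp [hvS]
    have hc := hcomp u ⟨hu, huS⟩ v ⟨hv, hvS⟩ huv
    simp only [huS, hvS, if_false, hc, List.cons_prefix_cons, true_and]
    exact (hE (comp v)).prefix_or_prefix_of_adj u ⟨⟨hu, huS⟩, hc⟩ v ⟨⟨hv, hvS⟩, rfl⟩ huv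
  ncard_cell_le
    | [], i => by
      refine (Set.ncard_le_ncard (fun v hv => ?_) (Set.toFinite _)).trans (hS i)
      obtain ⟨-, hv, hvi⟩ := hv
      by_cases hvS : v ∈ S
      · exact ⟨hvS, hvi⟩
      · simp [hvS] at hv
    | k :: p, i => by
      refine (Set.ncard_le_ncard (fun v hv => ?_) (Set.toFinite _)).trans
        ((hE k).ncard_cell_le p i)
      obtain ⟨hvR, hv, hvi⟩ := hv
      by_cases hvS : v ∈ S
      · simp [hvS] at hv
      · simp only [hvS, if_false, List.cons.injEq] at hv
        exact ⟨⟨⟨hvR, hvS⟩, hv.1⟩, hv.1 ▸ hv.2, hvi⟩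

theorem SimpleGraph.Subgraph.exists_label_of_ncard_supp_le [Finite V] (H : G.Subgraph) {m : ℕ}
    (hm : ∀ c : H.coe.ConnectedComponent, c.supp.ncard ≤ m) :
    ∃ comp : V → ℕ, (∀ u v, H.Adj u v → comp u = comp v) ∧
      ∀ k, {v ∈ H.verts | comp v = k}.ncard ≤ m := by
  classical
  obtain ⟨idx, hidx⟩ := Countable.exists_injective_nat H.coe.ConnectedComponent
  let comp : V → ℕ := fun v =>
    if h : v ∈ H.verts then idx (H.coe.connectedComponentMk ⟨v, h⟩) else 0
  have hcomp : ∀ v (hv : v ∈ H.verts), comp v = idx (H.coe.connectedComponentMk ⟨v, hv⟩) :=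
    fun v hv => dif_pos hv
  refine ⟨comp, fun u v huv => ?_, fun k => ?_⟩
  · rw [hcomp u (H.edge_vert huv), hcomp v (H.edge_vert huv.symm)]
    exact congrArg idx (SimpleGraph.ConnectedComponent.sound
      (SimpleGraph.Adj.reachable (show H.coe.Adj ⟨u, _⟩ ⟨v, _⟩ from huv)))
  · rcases Set.eq_empty_or_nonempty {v ∈ H.verts | comp v = k} with hk | ⟨v, hv, rfl⟩
    · simp [hk]
    refine (Set.ncard_le_ncard (t := Subtype.val '' (H.coe.connectedComponentMk ⟨v, hv⟩).supp)
      (fun w hw => ?_) (Set.toFinite _)).trans ?_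
    · obtain ⟨hw, hwk⟩ := hw
      rw [hcomp w hw, hcomp v hv] at hwk
      exact ⟨⟨w, hw⟩, hidx hwk, rfl⟩
    · rw [Set.ncard_image_of_injective _ Subtype.val_injective]
      exact hm _

theorem HasLayeredSeparator.exists_isTreeAddressing [Finite V]
    (hsep : HasLayeredSeparator G lay ℓ) (R : Set V) : ∃ e, IsTreeAddressing G lay ℓ R e := by
  classical
  induction hn : R.ncard using Nat.strong_induction_on generalizing R with
  | _ n ih =>
  rcases R.eq_empty_or_nonempty with rfl | hR
  · exact ⟨fun _ => [], isTreeAddressing_empty _⟩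
  obtain ⟨S, -, hS, hhalf⟩ := hsep ((⊤ : G.Subgraph).induce R)
  obtain ⟨comp, hcomp, hpart⟩ := SimpleGraph.Subgraph.exists_label_of_ncard_supp_le
    (((⊤ : G.Subgraph).induce R).deleteVerts S) (m := R.ncard / 2)
    fun c => (Nat.le_div_iff_mul_le two_pos).mpr (by simpa [mul_comm] using hhalf c)
  simp only [SimpleGraph.Subgraph.induce_verts] at hpart
  have hpos : 0 < n := hn ▸ (Set.ncard_pos (Set.toFinite R)).mpr hR
  choose E hE using fun k => ih _ (by have := hpart k; omega) {v ∈ R \ S | comp v = k} rfl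
  exact ⟨_, IsTreeAddressing.of_separator comp E hS
    (fun u hu v hv huv => hcomp u v (by simpa [hu.1, hu.2, hv.1, hv.2] using huv))
    (fun k => by have := hpart k; omega) hE⟩

end TreeAddressing

section Layout

variable {V α β : Type*} {G : SimpleGraph V} {lay : V → ℕ} {ℓ : ℕ} {e : V → List ℕ}
  {K : V → ℕ}

def Precedes [LT α] (f : V → α) (z₁ z₂ : Sym2 V) : Prop :=
  ∀ p ∈ z₁, ∀ q ∈ z₂, f p < f q

def EdgesSeparated [LT α] (lay : V → ℕ) (addr : V → α) (z₁ z₂ : Sym2 V) : Prop :=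
  (∃ p ∈ z₁, p ∈ z₂) ∨ Precedes lay z₁ z₂ ∨ Precedes lay z₂ z₁ ∨
    z₁.map lay = z₂.map lay ∧ (Precedes addr z₁ z₂ ∨ Precedes addr z₂ z₁)

theorem precedes_mk_iff [LT α] {f : V → α} {v w x y : V} :
    Precedes f s(v, w) s(x, y) ↔ f v < f x ∧ f v < f y ∧ f w < f x ∧ f w < f y := by
  simp only [Precedes, Sym2.mem_iff, forall_eq_or_imp, forall_eq]
  tauto

theorem map_mk_eq_map_mk_iff {v w x y : V} :
    s(v, w).map lay = s(x, y).map lay ↔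
      lay v = lay x ∧ lay w = lay y ∨ lay v = lay y ∧ lay w = lay x := by
  simp

theorem not_nested_of_edgesSeparated [LT α] [LinearOrder β] {addr : V → α} {pos : V → β}
    (hlay_le : ∀ u v, pos u < pos v → lay u ≤ lay v)
    (hlt : ∀ u v, lay u = lay v → addr u < addr v → pos u < pos v) {v w x y : V}
    (h : EdgesSeparated lay addr s(v, w) s(x, y)) :
    ¬ (pos v < pos x ∧ pos x < pos y ∧ pos y < pos w) := by
  rintro ⟨hvx, hxy, hyw⟩
  have := hlay_le _ _ hvx; have := hlay_le _ _ hxy; have := hlay_le _ _ hyw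
  rcases h with ⟨p, hp, hq⟩ | h | h | ⟨hmap, h | h⟩
  · rw [Sym2.mem_iff] at hp hq
    rcases hp with rfl | rfl <;> rcases hq with rfl | rfl <;> order
  all_goals simp only [precedes_mk_iff] at h
  · omega
  · omega
  all_goals rw [map_mk_eq_map_mk_iff] at hmap
  · exact (hlt w y (by omega) h.2.2.2).asymm hyw
  · exact (hlt x v (by omega) h.1).asymm hvx

theorem not_crossing_of_edgesSeparated [LT α] [LinearOrder β] {addr : V → α} {pos : V → β}
    (hlay_le : ∀ u v, pos u < pos v → lay u ≤ lay v)
    (hlt : ∀ u v, lay u = lay v → addr u < addr v →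
      if Odd (lay u) then pos v < pos u else pos u < pos v) {v w x y : V}
    (hvw : lay w ≤ lay v + 1) (h : EdgesSeparated lay addr s(v, w) s(x, y)) :
    ¬ (pos v < pos x ∧ pos x < pos w ∧ pos w < pos y) := by
  rintro ⟨hvx, hxw, hwy⟩
  have := hlay_le _ _ hvx; have := hlay_le _ _ hxw; have := hlay_le _ _ hwy
  rcases h with ⟨p, hp, hq⟩ | h | h | ⟨hmap, h | h⟩
  · rw [Sym2.mem_iff] at hp hq
    rcases hp with rfl | rfl <;> rcases hq with rfl | rfl <;> order
  all_goals simp only [precedes_mk_iff] at h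
  · omega
  · omega
  all_goals
    rw [map_mk_eq_map_mk_iff] at hmap
    have hx : lay x = lay v := by omega
    have hy : lay y = lay w := by omega
  · have f₁ := hlt v x hx.symm h.1
    have f₂ := hlt w y hy.symm h.2.2.2
    rcases (by omega : lay w = lay v ∨ lay w = lay v + 1) with hw | hw
    · have f₃ := hlt w x (by omega) h.2.2.1
      rw [hw] at f₃
      split_ifs at f₁ f₃ <;> order
    · rw [hw] at f₂
      simp only [Nat.odd_add_one] at f₂
      split_ifs at f₁ f₂ <;> order
  · have f₁ := hlt x v hx h.1
    have f₂ := hlt y w hy h.2.2.2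
    rcases (by omega : lay w = lay v ∨ lay w = lay v + 1) with hw | hw
    · have f₃ := hlt x w (by omega) h.2.1
      rw [hx] at f₁ f₃
      split_ifs at f₁ f₃ <;> order
    · rw [hy, hw] at f₂
      rw [hx] at f₁
      simp only [Nat.odd_add_one] at f₂
      split_ifs at f₁ f₂ <;> order

theorem precedes_of_lt_of_isPrefix {a₁ b₁ a₂ b₂ : V} (hlen : (e a₁).length = (e a₂).length)
    (hlt : e a₁ < e a₂) (hp₁ : e a₁ <+: e b₁) (hp₂ : e a₂ <+: e b₂) :
    Precedes e s(a₁, b₁) s(a₂, b₂) := by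
  have hext {q q'} := @List.lt_of_lt_of_isPrefix _ _ _ _ q q' hlen hlt
  exact precedes_mk_iff.mpr ⟨hext (List.prefix_refl _) (List.prefix_refl _),
    hext (List.prefix_refl _) hp₂, hext hp₁ (List.prefix_refl _), hext hp₁ hp₂⟩

def anchoredClass (lay : V → ℕ) (e : V → List ℕ) (K : V → ℕ) (a b : V) : ℕ × ℤ × ℕ × ℕ :=
  ((e a).length, (lay b : ℤ) - lay a, K a, lay a % 2)

-- When both depths agree, either endpoint is a valid anchor, so any representative of `z` will do.
noncomputable def edgeClass (lay : V → ℕ) (e : V → List ℕ) (K : V → ℕ) (z : Sym2 V) :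
    ℕ × ℤ × ℕ × ℕ :=
  if (e z.out.1).length ≤ (e z.out.2).length then anchoredClass lay e K z.out.1 z.out.2
  else anchoredClass lay e K z.out.2 z.out.1

theorem exists_edgeClass_eq_anchoredClass {v w : V} (hvw : G.Adj v w) :
    ∃ a b, G.Adj a b ∧ s(a, b) = s(v, w) ∧ (e a).length ≤ (e b).length ∧
      edgeClass lay e K s(v, w) = anchoredClass lay e K a b := by
  have hz : s(s(v, w).out.1, s(v, w).out.2) = s(v, w) := Quot.out_eq _
  have hadj : ∀ {a b}, s(a, b) = s(v, w) → G.Adj a b := fun hab => by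
    rwa [← SimpleGraph.mem_edgeSet, hab]
  unfold edgeClass
  split_ifs with h
  · exact ⟨_, _, hadj hz, hz, h, rfl⟩
  · have hz' := Sym2.eq_swap.trans hz
    exact ⟨_, _, hadj hz', hz', by omega, rfl⟩

theorem edgesSeparated_of_anchoredClass_eq (hlay : IsLayering G lay)
    (hK : ∀ u v, e u = e v → lay u = lay v → K u = K v → u = v) {a₁ b₁ a₂ b₂ : V}
    (h₁ : G.Adj a₁ b₁) (h₂ : G.Adj a₂ b₂) (hp₁ : e a₁ <+: e b₁) (hp₂ : e a₂ <+: e b₂)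
    (hc : anchoredClass lay e K a₁ b₁ = anchoredClass lay e K a₂ b₂) :
    EdgesSeparated lay e s(a₁, b₁) s(a₂, b₂) := by
  simp only [anchoredClass, Prod.mk.injEq] at hc
  obtain ⟨hlen, hδ, hKa, hpar⟩ := hc
  have := hlay a₁ b₁ h₁; have := hlay a₂ b₂ h₂
  by_cases ha : a₁ = a₂
  · exact Or.inl ⟨a₁, Sym2.mem_mk_left _ _, ha ▸ Sym2.mem_mk_left _ _⟩
  rcases lt_trichotomy (lay a₁) (lay a₂) with hl | hl | hl
  · exact Or.inr <| Or.inl <| precedes_mk_iff.mpr (by omega)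
  · have he : e a₁ ≠ e a₂ := fun he => ha (hK a₁ a₂ he hl hKa)
    refine Or.inr <| Or.inr <| Or.inr ⟨map_mk_eq_map_mk_iff.mpr (Or.inl ⟨hl, by omega⟩), ?_⟩
    rcases he.lt_or_gt with he | he
    · exact Or.inl (precedes_of_lt_of_isPrefix hlen he hp₁ hp₂)
    · exact Or.inr (precedes_of_lt_of_isPrefix hlen.symm he hp₂ hp₁)
  · exact Or.inr <| Or.inr <| Or.inl <| precedes_mk_iff.mpr (by omega)

theorem isPrefix_of_adj_of_length_le (he : ∀ u v, G.Adj u v → e u <+: e v ∨ e v <+: e u)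
    {a b : V} (hab : G.Adj a b) (hd : (e a).length ≤ (e b).length) : e a <+: e b :=
  (he a b hab).elim id fun hba => by rw [hba.eq_of_length (le_antisymm hba.length_le hd)]

theorem edgesSeparated_of_edgeClass_eq (hlay : IsLayering G lay)
    (he : ∀ u v, G.Adj u v → e u <+: e v ∨ e v <+: e u)
    (hK : ∀ u v, e u = e v → lay u = lay v → K u = K v → u = v) {v w x y : V}
    (hvw : G.Adj v w) (hxy : G.Adj x y)
    (hc : edgeClass lay e K s(v, w) = edgeClass lay e K s(x, y)) :
    EdgesSeparated lay e s(v, w) s(x, y) := by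
  obtain ⟨a₁, b₁, h₁, hab₁, hd₁, hc₁⟩ :=
    exists_edgeClass_eq_anchoredClass (lay := lay) (e := e) (K := K) hvw
  obtain ⟨a₂, b₂, h₂, hab₂, hd₂, hc₂⟩ :=
    exists_edgeClass_eq_anchoredClass (lay := lay) (e := e) (K := K) hxy
  rw [← hab₁, ← hab₂]
  exact edgesSeparated_of_anchoredClass_eq hlay hK h₁ h₂ (isPrefix_of_adj_of_length_le he h₁ hd₁)
    (isPrefix_of_adj_of_length_le he h₂ hd₂) (hc₁ ▸ hc₂ ▸ hc)

theorem edgeClass_mem [Fintype V] (hlay : IsLayering G lay)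
    (he : IsTreeAddressing G lay ℓ Set.univ e) (hK : ∀ v, K v < ℓ) {v w : V} (hvw : G.Adj v w) :
    edgeClass lay e K s(v, w) ∈ Finset.range (Nat.log 2 (Fintype.card V) + 1) ×ˢ
      Finset.Icc (-1 : ℤ) 1 ×ˢ Finset.range ℓ ×ˢ Finset.range 2 := by
  obtain ⟨a, b, hab, -, -, hc⟩ :=
    exists_edgeClass_eq_anchoredClass (lay := lay) (e := e) (K := K) hvw
  have hdepth := he.two_pow_length_le a trivial
  rw [Set.ncard_univ, Nat.card_eq_fintype_card] at hdepth
  have := hlay a b hab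
  simp only [hc, anchoredClass, Finset.mem_product, Finset.mem_range, Finset.mem_Icc]
  exact ⟨Nat.lt_succ_of_le (Nat.le_log_of_pow_le one_lt_two hdepth), by omega, hK a,
    Nat.mod_lt _ two_pos⟩

theorem card_image_edgeClass_le [Fintype V] [DecidableRel G.Adj] (hlay : IsLayering G lay)
    (he : IsTreeAddressing G lay ℓ Set.univ e) (hK : ∀ v, K v < ℓ) :
    (G.edgeFinset.image (edgeClass lay e K)).card ≤ 12 * ℓ * Nat.log 2 (Fintype.card V) := by
  rcases (G.edgeFinset.image (edgeClass lay e K)).eq_empty_or_nonempty with h | ⟨_, hz⟩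
  · simp [h]
  obtain ⟨z, hz, -⟩ := Finset.mem_image.mp hz
  induction z using Sym2.ind with | h v w => ?_
  have hvw : G.Adj v w := SimpleGraph.mem_edgeFinset.mp hz
  have hL : 1 ≤ Nat.log 2 (Fintype.card V) :=
    Nat.log_pos one_lt_two (Fintype.one_lt_card_iff_nontrivial.mpr ⟨v, w, hvw.ne⟩)
  calc _ ≤ (Finset.range (Nat.log 2 (Fintype.card V) + 1) ×ˢ
        Finset.Icc (-1 : ℤ) 1 ×ˢ Finset.range ℓ ×ˢ Finset.range 2).card := by
        refine Finset.card_le_card fun c hc => ?_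
        obtain ⟨z, hz, rfl⟩ := Finset.mem_image.mp hc
        induction z using Sym2.ind with
        | h x y => exact edgeClass_mem hlay he hK (SimpleGraph.mem_edgeFinset.mp hz)
    _ = (Nat.log 2 (Fintype.card V) + 1) * 6 * ℓ := by simp [Finset.card_product]; ring
    _ ≤ 12 * ℓ * Nat.log 2 (Fintype.card V) := by nlinarith

def layeredPos (lay rk : V → ℕ) (flip : ℕ → Prop) [DecidablePred flip] (v : V) : ℕ ×ₗ ℤ :=
  toLex (lay v, if flip (lay v) then -(rk v : ℤ) else rk v)

section LayeredPos

variable {rk : V → ℕ} {flip : ℕ → Prop} [DecidablePred flip]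

theorem layeredPos_injective (hrk : Injective rk) : Injective (layeredPos lay rk flip) := by
  intro u v h
  simp only [layeredPos, EmbeddingLike.apply_eq_iff_eq, Prod.mk.injEq] at h
  obtain ⟨hl, hr⟩ := h
  rw [hl] at hr
  split_ifs at hr <;> exact hrk (by omega)

theorem lay_le_of_layeredPos_lt {u v : V}
    (h : layeredPos lay rk flip u < layeredPos lay rk flip v) : lay u ≤ lay v := by
  rcases Prod.Lex.toLex_lt_toLex.mp h with h | ⟨h, -⟩ <;> simp only at h <;> omega

theorem layeredPos_lt_of_lay_eq {u v : V} (h : lay u = lay v) (hr : rk u < rk v) :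
    if flip (lay u) then layeredPos lay rk flip v < layeredPos lay rk flip u
    else layeredPos lay rk flip u < layeredPos lay rk flip v := by
  simp only [layeredPos, Prod.Lex.toLex_lt_toLex, h, lt_irrefl, true_and, false_or]
  split_ifs <;> omega

end LayeredPos

theorem exists_nat_layout_of_classes [Fintype V] [LinearOrder β] {pos : V → β}
    (hpos : Injective pos) (c : Sym2 V → α) {T : Finset α}
    (hT : ∀ v w, G.Adj v w → c s(v, w) ∈ T) :
    ∃ (pos' : V → ℕ) (f : Sym2 V → ℕ), Injective pos' ∧
      (∀ v w, G.Adj v w → f s(v, w) < T.card) ∧ (∀ u v, pos' u < pos' v ↔ pos u < pos v) ∧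
      ∀ v w x y, G.Adj v w → G.Adj x y → f s(v, w) = f s(x, y) → c s(v, w) = c s(x, y) := by
  obtain ⟨pos', hinj, hlt⟩ := exists_injective_nat_lt_iff hpos
  obtain ⟨code, hcode, hinjOn⟩ := T.exists_lt_card_injOn
  exact ⟨pos', code ∘ c, hinj, fun v w h => hcode _ (hT v w h), hlt,
    fun v w x y hvw hxy hf => hinjOn (hT v w hvw) (hT x y hxy) hf⟩

theorem HasStackLayout.of_classes [Fintype V] [LinearOrder β] {pos : V → β}
    (hpos : Injective pos) (c : Sym2 V → α) {T : Finset α}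
    (hT : ∀ v w, G.Adj v w → c s(v, w) ∈ T)
    (h : ∀ v w x y, G.Adj v w → G.Adj x y → c s(v, w) = c s(x, y) →
      ¬ (pos v < pos x ∧ pos x < pos w ∧ pos w < pos y)) :
    HasStackLayout G T.card := by
  obtain ⟨pos', f, hinj, hf, hlt, hc⟩ := exists_nat_layout_of_classes hpos c hT
  exact ⟨pos', f, hinj, hf, fun v w x y hvw hxy hfe => by
    simpa only [hlt] using h v w x y hvw hxy (hc v w x y hvw hxy hfe)⟩

theorem HasQueueLayout.of_classes [Fintype V] [LinearOrder β] {pos : V → β}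
    (hpos : Injective pos) (c : Sym2 V → α) {T : Finset α}
    (hT : ∀ v w, G.Adj v w → c s(v, w) ∈ T)
    (h : ∀ v w x y, G.Adj v w → G.Adj x y → c s(v, w) = c s(x, y) →
      ¬ (pos v < pos x ∧ pos x < pos y ∧ pos y < pos w)) :
    HasQueueLayout G T.card := by
  obtain ⟨pos', f, hinj, hf, hlt, hc⟩ := exists_nat_layout_of_classes hpos c hT
  exact ⟨pos', f, hinj, hf, fun v w x y hvw hxy hfe => by
    simpa only [hlt] using h v w x y hvw hxy (hc v w x y hvw hxy hfe)⟩

theorem IsTreeAddressing.exists_stack_queue_layouts [Fintype V] (hlay : IsLayering G lay)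
    (he : IsTreeAddressing G lay ℓ Set.univ e) :
    ∃ s ≤ 12 * ℓ * Nat.log 2 (Fintype.card V), HasStackLayout G s ∧ HasQueueLayout G s := by
  classical
  obtain ⟨K, hKlt, hK⟩ := exists_index_lt_of_ncard_fiber_le (fun v => (e v, lay v)) (ℓ := ℓ)
    fun ⟨p, i⟩ => by simpa [Prod.ext_iff] using he.ncard_cell_le p i
  obtain ⟨rk, hrk, hrklt⟩ := exists_injective_nat_lt_of_lt e
  have hsep {v w x y : V} (hvw : G.Adj v w) (hxy : G.Adj x y)
      (hc : edgeClass lay e K s(v, w) = edgeClass lay e K s(x, y)) :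
      EdgesSeparated lay e s(v, w) s(x, y) :=
    edgesSeparated_of_edgeClass_eq hlay (fun u v => he.prefix_or_prefix_of_adj u trivial v trivial)
      (fun u v heq hl => hK u v (Prod.ext heq hl)) hvw hxy hc
  have hT (v w : V) (h : G.Adj v w) :
      edgeClass lay e K s(v, w) ∈ G.edgeFinset.image (edgeClass lay e K) :=
    Finset.mem_image_of_mem _ (SimpleGraph.mem_edgeFinset.mpr h)
  refine ⟨_, card_image_edgeClass_le hlay he hKlt, ?_, ?_⟩
  · exact HasStackLayout.of_classes (layeredPos_injective (flip := Odd) hrk) _ hT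
      fun v w x y hvw hxy hc => not_crossing_of_edgesSeparated
        (fun _ _ => lay_le_of_layeredPos_lt)
        (fun u v h hlt => layeredPos_lt_of_lay_eq h (hrklt u v hlt))
        (by have := hlay v w hvw; omega) (hsep hvw hxy hc)
  · exact HasQueueLayout.of_classes (layeredPos_injective (flip := fun _ => False) hrk) _ hT
      fun v w x y hvw hxy hc => not_nested_of_edgesSeparated (fun _ _ => lay_le_of_layeredPos_lt)
        (fun u v h hlt => by
          simpa using layeredPos_lt_of_lay_eq (flip := fun _ => False) h (hrklt u v hlt))
        (hsep hvw hxy hc)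

end Layout

/-- If every graph in a family has a layered `ℓ`-separator for a fixed `ℓ`,
then every `n`-vertex graph in the family has stack-number `O(log n)` and
queue-number `O(log n)`. -/
theorem layered_separator_log_stack_and_queue (ℓ : ℕ) :
    ∃ C : ℝ, 0 ≤ C ∧
      ∀ (V : Type) [Fintype V] (G : SimpleGraph V) (lay : V → ℕ),
        IsLayering G lay → HasLayeredSeparator G lay ℓ →
        (∃ s : ℕ, HasStackLayout G s ∧
          (s : ℝ) ≤ C * Real.logb 2 (Fintype.card V)) ∧
        (∃ q : ℕ, HasQueueLayout G q ∧
          (q : ℝ) ≤ C * Real.logb 2 (Fintype.card V)) := by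
  refine ⟨12 * ℓ, by positivity, fun V _ G lay hlay hsep => ?_⟩
  obtain ⟨e, he⟩ := hsep.exists_isTreeAddressing Set.univ
  obtain ⟨s, hs, hstack, hqueue⟩ := he.exists_stack_queue_layouts hlay
  have hbound : (s : ℝ) ≤ 12 * ℓ * Real.logb 2 (Fintype.card V) := calc
    (s : ℝ) ≤ 12 * ℓ * (Nat.log 2 (Fintype.card V) : ℕ) := by exact_mod_cast hs
    _ ≤ 12 * ℓ * Real.logb 2 (Fintype.card V) := by gcongr; exact Real.natLog_le_logb _ _
  exact ⟨⟨s, hstack, hbound⟩, ⟨s, hqueue, hbound⟩⟩
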